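/- The Cantor–Bendixson rank of a countable nonempty set of tilings is not the successor of a limit ordinal: let τ = (Q, 𝒜) be a tile-set whose set of tilings S = 𝒯_τ is nonempty and countable, and let α be the least ordinal with S^{(α)} = ∅; then there is no limit ordinal β with α = β + 1. -/

import Mathlib

/-!
Let `S` be the set of tilings, and suppose `S^(β+1) = ∅` with `β` a limit ordinal. Then
`S^(β)` is compact with no accumulation points of its own, hence finite; being shift-invariant,
all of its points share a horizontal period `p` and a vertical period `q`. The clopen set of
configurations violating one of these periods at the origin misses
`S^(β) = ⋂_{γ<β} S^(γ)`, so by compactness it already misses some `S^(γ)` with `γ < β`. By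
shift invariance every point of `S^(γ)` is then `(p, q)`-periodic, so `S^(γ)` is finite and
`S^(γ+1) = ∅`, although `γ + 1 < β`.
-/

open Set

/-- A configuration assigns a state to each cell of the plane. -/
abbrev Config (Q : Type*) : Type _ := (ℤ × ℤ) → Q

/-- The shift by a vector `v`: `σ_v c = fun x => c (x + v)`. -/
def shiftC {Q : Type*} (v : ℤ × ℤ) (c : Config Q) : Config Q := fun x => c (x + v)

/-- The pattern `P` with (finite) domain `V` appears in `c` at translate `t`. -/
def AppearsAt {Q : Type*} (c : Config Q) (V : Finset (ℤ × ℤ)) (P : (ℤ × ℤ) → Q)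
    (t : ℤ × ℤ) : Prop :=
  ∀ x ∈ V, c (x + t) = P x

/-- The pattern `P` with (finite) domain `V` appears in `c`. -/
def Appears {Q : Type*} (c : Config Q) (V : Finset (ℤ × ℤ)) (P : (ℤ × ℤ) → Q) : Prop :=
  ∃ t : ℤ × ℤ, AppearsAt c V P t

/-- The pattern preorder: `x ≼ y` iff every pattern appearing in `x` appears in `y`. -/
def PatLe {Q : Type*} (x y : Config Q) : Prop :=
  ∀ (V : Finset (ℤ × ℤ)) (P : (ℤ × ℤ) → Q), Appears x V P → Appears y V P

/-- A set of configurations is shift-invariant. -/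
def ShiftInvariant {Q : Type*} (S : Set (Config Q)) : Prop :=
  ∀ c ∈ S, ∀ v : ℤ × ℤ, shiftC v c ∈ S

/-- `c` is an isolated point of `S` (in the subspace topology). -/
def IsolatedIn {Q : Type*} [TopologicalSpace Q] (S : Set (Config Q)) (c : Config Q) : Prop :=
  ∃ U : Set (Config Q), IsOpen U ∧ U ∩ S = {c}

/-- The topological derivative: the non-isolated points of `S`. -/
def derivSet {Q : Type*} [TopologicalSpace Q] (S : Set (Config Q)) : Set (Config Q) :=
  {c ∈ S | ¬ IsolatedIn S c}

/-- Transfinite iteration of the topological derivative (Cantor–Bendixson). -/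
noncomputable def CBIter {Q : Type*} [TopologicalSpace Q] (S : Set (Config Q))
    (o : Ordinal) : Set (Config Q) :=
  Ordinal.limitRecOn o S (fun _ ih => derivSet ih)
    (fun o _ ih => ⋂ (β : {β : Ordinal // β < o}), ih β.1 β.2)

/-- The Cantor–Bendixson rank of `c` in `S`: least `λ` with `c ∉ S^{(λ)}`. -/
noncomputable def CBRank {Q : Type*} [TopologicalSpace Q] (S : Set (Config Q))
    (c : Config Q) : Ordinal :=
  sInf {l : Ordinal | c ∉ CBIter S l}

/-- A configuration is periodic iff its shift orbit is finite (equivalently, its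
stabilizer has finite index in `ℤ²`). -/
def IsPeriodic {Q : Type*} (c : Config Q) : Prop :=
  (Set.range fun v : ℤ × ℤ => shiftC v c).Finite

/-- `c` is a tiling for the tile-set with domain `V` and allowed patterns `A`. -/
def IsTiling {Q : Type*} (V : Finset (ℤ × ℤ)) (A : Set ({x // x ∈ V} → Q))
    (c : Config Q) : Prop :=
  ∀ t : ℤ × ℤ, (fun y : {x // x ∈ V} => c (t + y.1)) ∈ A

/-- The set of tilings of a tile-set. -/
def Tilings {Q : Type*} (V : Finset (ℤ × ℤ)) (A : Set ({x // x ∈ V} → Q)) :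
    Set (Config Q) :=
  {c | IsTiling V A c}

section

variable {Q : Type*}

lemma shiftC_zero (c : Config Q) : shiftC 0 c = c := by
  funext x; simp [shiftC]

lemma shiftC_add (v w : ℤ × ℤ) (c : Config Q) : shiftC (v + w) c = shiftC v (shiftC w c) := by
  funext x; simp only [shiftC, add_assoc]

lemma shiftC_injective (v : ℤ × ℤ) : Function.Injective (shiftC (Q := Q) v) := fun a b h => by
  simpa [← shiftC_add, shiftC_zero] using congrArg (shiftC (-v)) h

lemma continuous_shiftC [TopologicalSpace Q] (v : ℤ × ℤ) : Continuous (shiftC (Q := Q) v) :=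
  continuous_pi fun x => continuous_apply (x + v)

def periods (c : Config Q) : AddSubgroup (ℤ × ℤ) where
  carrier := {v | shiftC v c = c}
  zero_mem' := shiftC_zero c
  add_mem' {v w} (hv : shiftC v c = c) (hw : shiftC w c = c) := by
    change shiftC (v + w) c = c
    rw [shiftC_add, hw, hv]
  neg_mem' {v} (hv : shiftC v c = c) := by
    change shiftC (-v) c = c
    conv_lhs => rw [← hv, ← shiftC_add, neg_add_cancel, shiftC_zero]

lemma mem_periods {c : Config Q} {v : ℤ × ℤ} : v ∈ periods c ↔ ∀ x, c (x + v) = c x :=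
  funext_iff

/-- A configuration with a horizontal and a vertical period is determined by its values on a
fundamental rectangle. -/
lemma finite_setOf_periodic [Finite Q] {p q : ℤ} (hp : p ≠ 0) (hq : q ≠ 0) :
    {c : Config Q | (p, 0) ∈ periods c ∧ (0, q) ∈ periods c}.Finite := by
  let R : Finset (ℤ × ℤ) := Finset.Ico 0 |p| ×ˢ Finset.Ico 0 |q|
  have hR : ∀ x : ℤ × ℤ, (x.1 % p, x.2 % q) ∈ R := fun x => by
    simp [R, Int.emod_nonneg _ hp, Int.emod_lt_abs _ hp, Int.emod_nonneg _ hq,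
      Int.emod_lt_abs _ hq]
  have hred : ∀ c : Config Q, (p, 0) ∈ periods c → (0, q) ∈ periods c →
      ∀ x, c x = c (x.1 % p, x.2 % q) := by
    intro c hpc hqc x
    have hv : (x.1 / p) • ((p, 0) : ℤ × ℤ) + (x.2 / q) • (0, q) ∈ periods c :=
      add_mem (zsmul_mem hpc _) (zsmul_mem hqc _)
    have hx : ((x.1 % p, x.2 % q) : ℤ × ℤ) + ((x.1 / p) • (p, 0) + (x.2 / q) • (0, q)) = x := by
      ext <;> simp [Int.emod_add_ediv_mul]
    calc c x = c ((x.1 % p, x.2 % q) + _) := by rw [hx]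
      _ = _ := mem_periods.1 hv _
  refine Finite.of_finite_image (f := fun (c : Config Q) (r : R) => c r) (toFinite _) ?_
  rintro c ⟨hpc, hqc⟩ c' ⟨hpc', hqc'⟩ h
  funext x
  rw [hred c hpc hqc, hred c' hpc' hqc']
  exact congrFun h ⟨_, hR x⟩

lemma ShiftInvariant.exists_zsmul_mem_periods {P : Set (Config Q)} (hinv : ShiftInvariant P)
    (hfin : P.Finite) (v : ℤ × ℤ) : ∃ k : ℤ, k ≠ 0 ∧ ∀ c ∈ P, k • v ∈ periods c := by
  have := hfin.to_subtype
  obtain ⟨a, b, hab, heq⟩ := Finite.exists_ne_map_eq_of_infinite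
    fun (k : ℤ) (c : P) => (⟨shiftC (k • v) c, hinv c c.2 _⟩ : P)
  refine ⟨a - b, sub_ne_zero.2 hab, fun c hc => ?_⟩
  have h := congrArg Subtype.val (congrFun heq ⟨shiftC (-b • v) c, hinv c hc _⟩)
  simp only [← shiftC_add, ← add_smul, add_neg_cancel, zero_smul, shiftC_zero,
    ← sub_eq_add_neg] at h
  exact h




lemma ShiftInvariant.mem_periods {S : Set (Config Q)} (hinv : ShiftInvariant S) {v : ℤ × ℤ}
    (h : ∀ z ∈ S, z v = z 0) {c : Config Q} (hc : c ∈ S) : v ∈ periods c :=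
  _root_.mem_periods.2 fun x => by simpa [shiftC, add_comm] using h _ (hinv c hc x)

lemma isOpen_setOf_apply_eq [TopologicalSpace Q] [DiscreteTopology Q] (a b : ℤ × ℤ) :
    IsOpen {z : Config Q | z a = z b} :=
  (isOpen_discrete (diagonal Q)).preimage (f := fun z : Config Q => (z a, z b)) (by fun_prop)

lemma isClosed_tilings [TopologicalSpace Q] [DiscreteTopology Q]
    (V : Finset (ℤ × ℤ)) (A : Set ({x // x ∈ V} → Q)) : IsClosed (Tilings V A) := by
  have h : Tilings V A = ⋂ t : ℤ × ℤ, (fun c : Config Q => fun y : V => c (t + y.1)) ⁻¹' A := by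
    ext c; simp [Tilings, IsTiling]
  rw [h]
  exact isClosed_iInter fun t =>
    (isClosed_discrete A).preimage (continuous_pi fun y => continuous_apply _)

lemma shiftInvariant_tilings (V : Finset (ℤ × ℤ)) (A : Set ({x // x ∈ V} → Q)) :
    ShiftInvariant (Tilings V A) := by
  intro c hc v t
  simpa only [shiftC, add_right_comm] using hc (t + v)

section CantorBendixson

variable [TopologicalSpace Q]

lemma derivSet_subset (S : Set (Config Q)) : derivSet S ⊆ S :=
  fun _ h => h.1

lemma isClosed_derivSet {S : Set (Config Q)} (hS : IsClosed S) : IsClosed (derivSet S) := by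
  refine isOpen_compl_iff.1 (isOpen_iff_forall_mem_open.2 fun c hc => ?_)
  by_cases hcS : c ∈ S
  · obtain ⟨U, hUo, hUS⟩ : IsolatedIn S c := not_not.1 fun h => hc ⟨hcS, h⟩
    refine ⟨U, fun z hzU hz => hz.2 ?_, hUo, (hUS.symm ▸ rfl : c ∈ U ∩ S).1⟩
    rw [(hUS ▸ ⟨hzU, hz.1⟩ : z ∈ ({c} : Set _))]
    exact ⟨U, hUo, hUS⟩
  · exact ⟨Sᶜ, fun z hz hzd => hz hzd.1, hS.isOpen_compl, hcS⟩

lemma ShiftInvariant.derivSet {S : Set (Config Q)} (hS : ShiftInvariant S) :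
    ShiftInvariant (derivSet S) := by
  rintro c ⟨hcS, hni⟩ v
  refine ⟨hS c hcS v, fun ⟨U, hUo, hUS⟩ =>
    hni ⟨shiftC v ⁻¹' U, hUo.preimage (continuous_shiftC v), ?_⟩⟩
  have hcU : shiftC v c ∈ U := (hUS.symm ▸ rfl : shiftC v c ∈ U ∩ S).1
  ext y
  refine ⟨fun ⟨hyU, hyS⟩ => shiftC_injective v ?_, fun hy => hy ▸ ⟨hcU, hcS⟩⟩
  have hy : shiftC v y ∈ U ∩ S := ⟨hyU, hS y hyS v⟩
  rwa [hUS] at hy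

lemma derivSet_eq_empty_iff {S : Set (Config Q)} : derivSet S = ∅ ↔ IsDiscrete S := by
  simp only [isDiscrete_iff_forall_mem_exists_isOpen, eq_empty_iff_forall_notMem, derivSet,
    mem_ofPred_eq, not_and, not_not, IsolatedIn]

lemma Set.Finite.derivSet_eq_empty [T1Space Q] {S : Set (Config Q)} (hS : S.Finite) :
    derivSet S = ∅ :=
  derivSet_eq_empty_iff.2 hS.isDiscrete

lemma IsCompact.finite_of_derivSet_eq_empty {S : Set (Config Q)} (hS : IsCompact S)
    (h : derivSet S = ∅) : S.Finite :=
  hS.finite (derivSet_eq_empty_iff.1 h)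

lemma CBIter_zero (S : Set (Config Q)) : CBIter S 0 = S :=
  Ordinal.limitRecOn_zero _ _ _

lemma CBIter_add_one (S : Set (Config Q)) (o : Ordinal) :
    CBIter S (o + 1) = derivSet (CBIter S o) :=
  Ordinal.limitRecOn_add_one _ _ _ _

lemma CBIter_of_isSuccLimit (S : Set (Config Q)) {o : Ordinal} (ho : Order.IsSuccLimit o) :
    CBIter S o = ⋂ γ : {γ : Ordinal // γ < o}, CBIter S γ :=
  Ordinal.limitRecOn_limit _ _ _ _ ho

lemma CBIter_antitone (S : Set (Config Q)) : Antitone (CBIter S) := by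
  intro γ o h
  induction o using Ordinal.limitRecOn with
  | zero => rw [nonpos_iff_eq_zero.1 h]
  | add_one o ih =>
    rcases h.lt_or_eq with hlt | rfl
    · rw [CBIter_add_one]
      exact (derivSet_subset _).trans (ih (Order.lt_add_one_iff.1 hlt))
    · rfl
  | limit o ho ih =>
    rcases h.lt_or_eq with hlt | rfl
    · rw [CBIter_of_isSuccLimit S ho]
      exact iInter_subset (fun δ : {δ // δ < o} => CBIter S δ) ⟨γ, hlt⟩
    · rfl

lemma isClosed_CBIter {S : Set (Config Q)} (hS : IsClosed S) (o : Ordinal) :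
    IsClosed (CBIter S o) := by
  induction o using Ordinal.limitRecOn with
  | zero => rwa [CBIter_zero]
  | add_one o ih => rw [CBIter_add_one]; exact isClosed_derivSet ih
  | limit o ho ih => rw [CBIter_of_isSuccLimit S ho]; exact isClosed_iInter fun γ => ih γ.1 γ.2

lemma ShiftInvariant.CBIter {S : Set (Config Q)} (hS : ShiftInvariant S) (o : Ordinal) :
    ShiftInvariant (CBIter S o) := by
  induction o using Ordinal.limitRecOn with
  | zero => rwa [CBIter_zero]
  | add_one o ih => rw [CBIter_add_one]; exact ih.derivSet
  | limit o ho ih =>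
    intro c hc v
    simp only [CBIter_of_isSuccLimit S ho, mem_iInter] at hc ⊢
    exact fun γ => ih γ.1 γ.2 c (hc γ) v

lemma CBIter_inter_nonempty_of_isSuccLimit [CompactSpace Q] {S C : Set (Config Q)}
    (hS : IsClosed S) (hC : IsClosed C) {β : Ordinal} (hβ : Order.IsSuccLimit β)
    (h : ∀ γ < β, (CBIter S γ ∩ C).Nonempty) : (CBIter S β ∩ C).Nonempty := by
  have : Nonempty {γ : Ordinal // γ < β} := ⟨⟨0, hβ.bot_lt⟩⟩
  have hclosed (γ : {γ : Ordinal // γ < β}) : IsClosed (CBIter S γ ∩ C) :=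
    (isClosed_CBIter hS γ).inter hC
  rw [CBIter_of_isSuccLimit S hβ, iInter_inter]
  exact IsCompact.nonempty_iInter_of_directed_nonempty_isCompact_isClosed _
    (Antitone.directed_ge fun _ _ hγδ => inter_subset_inter_left C (CBIter_antitone S hγδ))
    (fun γ => h γ γ.2) (fun γ => (hclosed γ).isCompact) hclosed

end CantorBendixson

theorem CBIter_add_one_nonempty_of_isSuccLimit [TopologicalSpace Q] [DiscreteTopology Q]
    [Finite Q] {S : Set (Config Q)} (hS : IsClosed S) (hinv : ShiftInvariant S) {β : Ordinal}
    (hβ : Order.IsSuccLimit β) (h : ∀ γ < β, (CBIter S γ).Nonempty) :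
    (CBIter S (β + 1)).Nonempty := by
  by_contra hempty
  have hfin : (CBIter S β).Finite := (isClosed_CBIter hS β).isCompact.finite_of_derivSet_eq_empty
    (by rwa [← CBIter_add_one, ← not_nonempty_iff_eq_empty])
  obtain ⟨p, hp, hpP⟩ := (hinv.CBIter β).exists_zsmul_mem_periods hfin (1, 0)
  obtain ⟨q, hq, hqP⟩ := (hinv.CBIter β).exists_zsmul_mem_periods hfin (0, 1)
  let E : Set (Config Q) := {z | z (p, 0) = z 0} ∩ {z | z (0, q) = z 0}

  have hE : IsClosed Eᶜ :=
    ((isOpen_setOf_apply_eq _ _).inter (isOpen_setOf_apply_eq _ _)).isClosed_compl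
  obtain ⟨γ, hγ, hγE⟩ : ∃ γ < β, CBIter S γ ⊆ E := by
    by_contra! hnot
    obtain ⟨z, hzβ, hzE⟩ := CBIter_inter_nonempty_of_isSuccLimit hS hE hβ
      fun γ hγ => inter_compl_nonempty_iff.2 (hnot γ hγ)
    refine hzE ⟨?_, ?_⟩
    · simpa using mem_periods.1 (hpP z hzβ) 0
    · simpa using mem_periods.1 (hqP z hzβ) 0
  have hper : CBIter S γ ⊆ {c | (p, 0) ∈ periods c ∧ (0, q) ∈ periods c} := fun c hc =>
    ⟨(hinv.CBIter γ).mem_periods (fun z hz => (hγE hz).1) hc,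
      (hinv.CBIter γ).mem_periods (fun z hz => (hγE hz).2) hc⟩
  have hnext := ((finite_setOf_periodic hp hq).subset hper).derivSet_eq_empty
  rw [← CBIter_add_one] at hnext
  exact (h (γ + 1) (hβ.add_one_lt hγ)).ne_empty hnext

end

theorem stmt16_general {Q : Type*} [Fintype Q] [TopologicalSpace Q] [DiscreteTopology Q]
    (V : Finset (ℤ × ℤ)) (A : Set ({x // x ∈ V} → Q))
    (α : Ordinal) (hempty : CBIter (Tilings V A) α = ∅)
    (hleast : ∀ β < α, CBIter (Tilings V A) β ≠ ∅) :
    ¬ ∃ β : Ordinal, Order.IsSuccLimit β ∧ α = β + 1 := by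
  rintro ⟨β, hβ, rfl⟩
  have hbelow : ∀ γ < β, (CBIter (Tilings V A) γ).Nonempty := fun γ hγ =>
    nonempty_iff_ne_empty.2 (hleast γ (hγ.trans (Order.lt_add_one_iff.2 le_rfl)))
  exact (CBIter_add_one_nonempty_of_isSuccLimit (isClosed_tilings V A)
    (shiftInvariant_tilings V A) hβ hbelow).ne_empty hempty

/-- The Cantor–Bendixson rank of a countable nonempty set of
tilings is not the successor of a limit ordinal. -/
theorem stmt16 {Q : Type*} [Fintype Q] [Nonempty Q] [TopologicalSpace Q] [DiscreteTopology Q]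
    (V : Finset (ℤ × ℤ)) (A : Set ({x // x ∈ V} → Q))
    (hne : (Tilings V A).Nonempty) (hcount : (Tilings V A).Countable)
    (α : Ordinal) (hempty : CBIter (Tilings V A) α = ∅)
    (hleast : ∀ β < α, CBIter (Tilings V A) β ≠ ∅) :
    ¬ ∃ β : Ordinal, Order.IsSuccLimit β ∧ α = β + 1 :=
  stmt16_general V A α hempty hleast
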